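/- arXiv:1701.04995 — 6 statements merged into one kernel-verified Lean document; each statement's English description precedes it below -/
import Mathlib

section
/- Let μ be a nontrivial positive measure on the unit circle T, let w ∈ ℂ with |w| ≥ 1, and let f be a μ-integrable function on T such that ∫_T ζ̄ |f(ζ)| (1 - w̄ζ) dμ(ζ) = 0. Then f = 0 μ-almost everywhere if |w| > 1, and f = 0 μ-almost everywhere on T \ {w} if |w| = 1. -/
/-!
On the unit circle `ζ̄ (1 - w̄ ζ) = -conj (w - ζ)`, so the hypothesis says `∫ |f| conj (w - ζ) dμ = 0`.
Multiplying by `w` and taking real parts gives `∫ |f(ζ)| Re (w conj (w - ζ)) dμ = 0`, and for `|ζ| = 1`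
the weight satisfies `2 Re (w conj (w - ζ)) = |w - ζ|² + (|w|² - 1)`. It is therefore nonnegative
when `|w| ≥ 1`, so `|f|` vanishes a.e. wherever the weight is positive: everywhere if `|w| > 1`,
and off `ζ = w` if `|w| = 1`.
-/

open MeasureTheory Complex ComplexConjugate

theorem ae_imp_eq_zero_of_integral_norm_mul_eq_zero {α E : Type*} [MeasurableSpace α]
    [NormedAddCommGroup E] {μ : Measure α} {f : α → E} {g : α → ℝ}
    (hint : Integrable (fun x => ‖f x‖ * g x) μ) (hg : 0 ≤ᵐ[μ] g)
    (hzero : ∫ x, ‖f x‖ * g x ∂μ = 0) :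
    ∀ᵐ x ∂μ, 0 < g x → f x = 0 := by
  have hnonneg : 0 ≤ᵐ[μ] fun x => ‖f x‖ * g x :=
    hg.mono fun x hx => mul_nonneg (norm_nonneg _) hx
  filter_upwards [(integral_eq_zero_iff_of_nonneg_ae hnonneg hint).1 hzero] with x hx hgx
  exact norm_eq_zero.1 ((mul_eq_zero.1 hx).resolve_right hgx.ne')

theorem ae_imp_eq_zero_of_integral_norm_mul_eq_zero_of_re_nonneg {α E : Type*}
    [MeasurableSpace α] [NormedAddCommGroup E] {μ : Measure α} {f : α → E} {g : α → ℂ}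
    (hint : Integrable (fun x => (‖f x‖ : ℂ) * g x) μ) (hg : ∀ᵐ x ∂μ, 0 ≤ (g x).re)
    (hzero : ∫ x, (‖f x‖ : ℂ) * g x ∂μ = 0) :
    ∀ᵐ x ∂μ, 0 < (g x).re → f x = 0 := by
  have hre : ∀ x, ‖f x‖ * (g x).re = RCLike.re ((‖f x‖ : ℂ) * g x) := fun x =>
    (re_ofReal_mul _ _).symm
  refine ae_imp_eq_zero_of_integral_norm_mul_eq_zero ?_ hg ?_
  · simpa only [hre] using hint.re
  · rw [funext hre, integral_re hint, hzero, map_zero]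

namespace Complex

theorem conj_mul_one_sub_conj_mul_of_norm_eq_one {ζ : ℂ} (hζ : ‖ζ‖ = 1) (w : ℂ) :
    conj ζ * (1 - conj w * ζ) = -conj (w - ζ) := by
  have hζζ : conj ζ * ζ = 1 := by
    rw [mul_comm, mul_conj, ← ofReal_one, ofReal_inj, normSq_eq_norm_sq, hζ, one_pow]
  rw [map_sub]
  linear_combination (-conj w) * hζζ

theorem two_mul_re_mul_conj_sub (w ζ : ℂ) :
    2 * (w * conj (w - ζ)).re = ‖w - ζ‖ ^ 2 + (‖w‖ ^ 2 - ‖ζ‖ ^ 2) := by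
  simp only [← normSq_eq_norm_sq, normSq_apply, mul_re, conj_re, conj_im, sub_re, sub_im]
  ring

end Complex

theorem lemma_positive_ii_general
    (μ : Measure ℂ)
    (hcirc : ∀ᵐ ζ ∂μ, ‖ζ‖ = 1)
    (w : ℂ) (hw : 1 ≤ ‖w‖)
    (f : ℂ → ℂ) (hf : Integrable f μ)
    (hzero : ∫ ζ, (starRingEnd ℂ) ζ * (‖f ζ‖ : ℂ) * (1 - (starRingEnd ℂ) w * ζ) ∂μ = 0) :
    (1 < ‖w‖ → f =ᵐ[μ] 0) ∧ (‖w‖ = 1 → ∀ᵐ ζ ∂μ, ζ ≠ w → f ζ = 0) := by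
  have hweight : ∀ᵐ ζ ∂μ, 2 * (w * conj (w - ζ)).re = ‖w - ζ‖ ^ 2 + (‖w‖ ^ 2 - 1) :=
    hcirc.mono fun ζ hζ => by rw [two_mul_re_mul_conj_sub, hζ, one_pow]
  have hint : Integrable (fun ζ => (‖f ζ‖ : ℂ) * (w * conj (w - ζ))) μ := by
    refine hf.norm.ofReal.mul_bdd (by fun_prop) (c := ‖w‖ * (‖w‖ + 1)) ?_
    filter_upwards [hcirc] with ζ hζ
    rw [norm_mul, norm_conj]
    gcongr
    simpa [hζ] using norm_sub_le w ζ
  have hweighted_zero : ∫ ζ, (‖f ζ‖ : ℂ) * (w * conj (w - ζ)) ∂μ = 0 := by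
    rw [← mul_zero (-w), ← hzero, ← integral_const_mul]
    refine integral_congr_ae (hcirc.mono fun ζ hζ => ?_)
    simp only [mul_right_comm _ (‖f ζ‖ : ℂ), conj_mul_one_sub_conj_mul_of_norm_eq_one hζ]
    ring
  have hvanish := ae_imp_eq_zero_of_integral_norm_mul_eq_zero_of_re_nonneg hint
    (hweight.mono fun ζ hζ => by nlinarith [sq_nonneg ‖w - ζ‖]) hweighted_zero
  refine ⟨fun hw1 => ?_, fun hw1 => ?_⟩
  · filter_upwards [hvanish, hweight] with ζ hkey hζ
    exact hkey (by nlinarith [sq_nonneg ‖w - ζ‖])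
  · filter_upwards [hvanish, hweight] with ζ hkey hζ hne
    have : 0 < ‖w - ζ‖ := norm_pos_iff.2 (sub_ne_zero.2 hne.symm)
    exact hkey (by rw [hw1] at hζ; nlinarith)

/-- Lemma 2.1(ii): if `μ` is a nontrivial positive measure on the unit circle, `|w| ≥ 1`,
and `∫ ζ̄ |f(ζ)| (1 - w̄ζ) dμ(ζ) = 0`, then `f = 0` μ-a.e. when `|w| > 1`,
and `f = 0` μ-a.e. on `𝕋 \ {w}` when `|w| = 1`. -/
theorem lemma_positive_ii
    (μ : Measure ℂ) [IsFiniteMeasure μ]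
    (hcirc : ∀ᵐ ζ ∂μ, ‖ζ‖ = 1)
    (hnt : Set.Infinite {ζ : ℂ | ∀ ε > 0, μ (Metric.ball ζ ε) ≠ 0})
    (w : ℂ) (hw : 1 ≤ ‖w‖)
    (f : ℂ → ℂ) (hf : Integrable f μ)
    (hzero : ∫ ζ, (starRingEnd ℂ) ζ * (‖f ζ‖ : ℂ) * (1 - (starRingEnd ℂ) w * ζ) ∂μ = 0) :
    (1 < ‖w‖ → f =ᵐ[μ] 0) ∧ (‖w‖ = 1 → ∀ᵐ ζ ∂μ, ζ ≠ w → f ζ = 0) :=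
  lemma_positive_ii_general μ hcirc w hw f hf hzero
end

section
/- Let φ_n be the orthonormal polynomials for a nontrivial positive measure μ on the unit circle, and K_n(z,w;μ) = Σ_{j=0}^n conj(φ_j(w;μ)) φ_j(z;μ) the Christoffel–Darboux kernel. If |w| > 1, then every zero z of the polynomial z ↦ K_n(z,w;μ) satisfies |z| < 1. -/
open MeasureTheory Complex Polynomial

/-- The Christoffel–Darboux kernel built from a family of polynomials. -/
noncomputable def CDkernel (φ : ℕ → Polynomial ℂ) (n : ℕ) (z w : ℂ) : ℂ :=
  ∑ j ∈ Finset.range (n + 1), (starRingEnd ℂ) ((φ j).eval w) * (φ j).eval z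

/-- `φ` is the sequence of orthonormal polynomials (with positive leading coefficients)
of the measure `μ` on the unit circle. -/
def IsOPUC (μ : Measure ℂ) (φ : ℕ → Polynomial ℂ) : Prop :=
  (∀ n, (φ n).degree = n) ∧
  (∀ n, 0 < ((φ n).leadingCoeff).re ∧ ((φ n).leadingCoeff).im = 0) ∧
  (∀ m n, ∫ ζ, (starRingEnd ℂ) ((φ m).eval ζ) * (φ n).eval ζ ∂μ =
    if m = n then 1 else 0)

/-!
`K_n(·, w)` is the reproducing kernel at `w` of the polynomials of degree `≤ n` in `L²(μ)`.
If it vanishes at `z`, write it as `(X - z) r`. The polynomial `(1 - z̄ X) r` has the same modulus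
on the circle, so reproducing it at `w` gives `|1 - z̄ w| ≤ |w - z|`, that is
`(1 - |z|²)(|w|² - 1) ≥ 0`, and hence `|z| ≤ 1`; a zero on the circle would force `|w| = 1`.
-/

open ComplexConjugate

theorem Continuous.integrable_of_ae_mem_compact {X E : Type*} [TopologicalSpace X] [T2Space X]
    [MeasurableSpace X] [OpensMeasurableSpace X] [NormedAddCommGroup E] {μ : Measure X}
    [IsFiniteMeasureOnCompacts μ] {K : Set X} (hK : IsCompact K) (hμ : ∀ᵐ x ∂μ, x ∈ K)
    {f : X → E} (hf : Continuous f) : Integrable f μ := by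
  rw [← Measure.restrict_eq_self_of_ae_mem hμ]
  exact hf.continuousOn.integrableOn_compact hK

theorem Complex.conj_mul_self_of_norm_eq_one {z : ℂ} (hz : ‖z‖ = 1) : conj z * z = 1 := by
  rw [conj_mul', hz, ofReal_one, one_pow]

theorem Complex.norm_one_sub_conj_mul_of_norm_eq_one (z : ℂ) {ζ : ℂ} (hζ : ‖ζ‖ = 1) :
    ‖1 - conj z * ζ‖ = ‖ζ - z‖ := by
  have : 1 - conj z * ζ = ζ * conj (ζ - z) := by
    rw [map_sub, mul_sub, mul_comm ζ (conj ζ), conj_mul_self_of_norm_eq_one hζ, mul_comm]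
  rw [this, norm_mul, hζ, one_mul, RCLike.norm_conj]

theorem Complex.sq_norm_sub_sub_sq_norm_one_sub_conj_mul (z w : ℂ) :
    ‖w - z‖ ^ 2 - ‖1 - conj z * w‖ ^ 2 = (1 - ‖z‖ ^ 2) * (‖w‖ ^ 2 - 1) := by
  simp only [Complex.sq_norm, normSq_apply, sub_re, sub_im, mul_re, mul_im, one_re, one_im,
    conj_re, conj_im]
  ring

def IsReproducingKernel (μ : Measure ℂ) (n : ℕ) (w : ℂ) (p : ℂ[X]) : Prop :=
  p.natDegree ≤ n ∧
    ∀ q : ℂ[X], q.natDegree ≤ n → ∫ ζ, conj (p.eval ζ) * q.eval ζ ∂μ = q.eval w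

noncomputable def kernelPoly (φ : ℕ → ℂ[X]) (n : ℕ) (w : ℂ) : ℂ[X] :=
  ∑ j ∈ Finset.range (n + 1), C (conj ((φ j).eval w)) * φ j

theorem eval_kernelPoly (φ : ℕ → ℂ[X]) (n : ℕ) (z w : ℂ) :
    (kernelPoly φ n w).eval z = CDkernel φ n z w := by
  simp [kernelPoly, CDkernel, eval_finsetSum]

section UnitCircle

variable {μ : Measure ℂ} [IsFiniteMeasure μ] (hμ : ∀ᵐ ζ ∂μ, ‖ζ‖ = 1)
include hμ

theorem integrable_conj_eval_mul_eval (f g : ℂ[X]) :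
    Integrable (fun ζ => conj (f.eval ζ) * g.eval ζ) μ :=
  ((continuous_conj.comp f.continuous).mul g.continuous).integrable_of_ae_mem_compact
    (isCompact_sphere 0 1) (by simpa using hμ)

theorem integral_conj_eval_kernelPoly_mul_eval {φ : ℕ → ℂ[X]} (hφ : IsOPUC μ φ) {n k : ℕ}
    (hk : k ≤ n) (w : ℂ) :
    ∫ ζ, conj ((kernelPoly φ n w).eval ζ) * (φ k).eval ζ ∂μ = (φ k).eval w := by
  have hexpand : ∀ ζ, conj ((kernelPoly φ n w).eval ζ) * (φ k).eval ζ
      = ∑ j ∈ Finset.range (n + 1), (φ j).eval w * (conj ((φ j).eval ζ) * (φ k).eval ζ) := by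
    intro ζ
    simp only [kernelPoly, eval_finsetSum, eval_mul, eval_C, map_sum, map_mul, conj_conj,
      Finset.sum_mul, mul_assoc]
  simp only [hexpand]
  rw [integral_finsetSum _ fun j _ => (integrable_conj_eval_mul_eval hμ _ _).const_mul _]
  simp only [integral_const_mul, hφ.2.2, mul_ite, mul_one, mul_zero]
  rw [Finset.sum_ite_eq', if_pos (Finset.mem_range_succ_iff.mpr hk)]

theorem isReproducingKernel_kernelPoly {φ : ℕ → ℂ[X]} (hφ : IsOPUC μ φ) (n : ℕ) (w : ℂ) :
    IsReproducingKernel μ n w (kernelPoly φ n w) := by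
  have hdeg := hφ.1
  refine ⟨natDegree_sum_le_of_forall_le _ _ fun j hj => ?_, fun q hq => ?_⟩
  · exact (natDegree_C_mul_le _ _).trans ((natDegree_eq_of_degree_eq_some (hdeg j)).trans_le
      (Finset.mem_range_succ_iff.mp hj))
  have hspan : q ∈ Submodule.span ℂ (φ '' Set.Iic n) := by
    rw [Sequence.span_degreeLE ⟨φ, hdeg⟩ fun i _ => ?_, mem_degreeLE]
    · exact degree_le_of_natDegree_le hq
    · exact (leadingCoeff_ne_zero.mpr (Sequence.ne_zero ⟨φ, hdeg⟩ i)).isUnit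
  clear hq
  induction hspan using Submodule.span_induction with
  | mem q hq =>
    obtain ⟨k, hk, rfl⟩ := hq
    exact integral_conj_eval_kernelPoly_mul_eval hμ hφ hk w
  | zero => simp
  | add f g _ _ hf hg =>
    simp only [eval_add, mul_add]
    rw [integral_add (integrable_conj_eval_mul_eval hμ _ _)
      (integrable_conj_eval_mul_eval hμ _ _), hf, hg]
  | smul c f _ hf =>
    simp only [eval_smul, smul_eq_mul, mul_left_comm _ c]
    rw [integral_const_mul, hf]

namespace IsReproducingKernel

variable {n : ℕ} {w z : ℂ} {p r : ℂ[X]}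

omit [IsFiniteMeasure μ] hμ in
theorem eval_self (hp : IsReproducingKernel μ n w p) :
    p.eval w = ((∫ ζ, ‖p.eval ζ‖ ^ 2 ∂μ : ℝ) : ℂ) := by
  calc p.eval w = ∫ ζ, conj (p.eval ζ) * p.eval ζ ∂μ := (hp.2 p hp.1).symm
    _ = ∫ ζ, ((‖p.eval ζ‖ ^ 2 : ℝ) : ℂ) ∂μ := by simp only [conj_mul', ofReal_pow]
    _ = _ := integral_ofReal

theorem eval_ne_zero (hp : IsReproducingKernel μ n w p) : p.eval w ≠ 0 := by
  intro hpw
  -- `p` cannot vanish a.e., since it reproduces the constant `1`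
  have hsq : ∫ ζ, ‖p.eval ζ‖ ^ 2 ∂μ = 0 := by exact_mod_cast hp.eval_self.symm.trans hpw
  have hint : Integrable (fun ζ => ‖p.eval ζ‖ ^ 2) μ :=
    (p.continuous.norm.pow 2).integrable_of_ae_mem_compact (isCompact_sphere 0 1)
      (by simpa using hμ)
  rw [integral_eq_zero_iff_of_nonneg (fun ζ => by positivity) hint] at hsq
  have hone : ∫ ζ, conj (p.eval ζ) ∂μ = 1 := by simpa using hp.2 1 (by simp)
  have hp0 : (fun ζ => conj (p.eval ζ)) =ᵐ[μ] 0 := hsq.mono fun ζ hζ => by simpa using hζ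
  rw [integral_congr_ae hp0] at hone
  simp at hone

theorem eval_ne_zero_of_eq_mul (hp : IsReproducingKernel μ n w p) (hr : p = (X - C z) * r) :
    r.eval w ≠ 0 := fun h => hp.eval_ne_zero hμ (by simp [hr, h])

theorem natDegree_lt_of_eq_mul (hp : IsReproducingKernel μ n w p) (hr : p = (X - C z) * r) :
    r.natDegree < n := by
  have hr0 : r ≠ 0 := by rintro rfl; exact hp.eval_ne_zero hμ (by simp [hr])
  have := hp.1
  rwa [hr, natDegree_mul (X_sub_C_ne_zero z) hr0, natDegree_X_sub_C, add_comm,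
    Nat.add_one_le_iff] at this

theorem norm_one_sub_conj_mul_le (hp : IsReproducingKernel μ n w p) (hr : p = (X - C z) * r) :
    ‖1 - conj z * w‖ ≤ ‖w - z‖ := by
  have hr_deg := hp.natDegree_lt_of_eq_mul hμ hr
  set q := (1 - C (conj z) * X) * r
  have hq_deg : q.natDegree ≤ n :=
    (natDegree_mul_le_of_le (by compute_degree) le_rfl).trans (by omega)
  have hq_norm : ∀ᵐ ζ ∂μ, ‖q.eval ζ‖ = ‖p.eval ζ‖ := by
    filter_upwards [hμ] with ζ hζ
    simp [q, hr, norm_one_sub_conj_mul_of_norm_eq_one z hζ]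
  have hqp : ‖q.eval w‖ ≤ ‖p.eval w‖ :=
    calc ‖q.eval w‖ = ‖∫ ζ, conj (p.eval ζ) * q.eval ζ ∂μ‖ := by rw [hp.2 q hq_deg]
      _ ≤ ∫ ζ, ‖conj (p.eval ζ) * q.eval ζ‖ ∂μ := norm_integral_le_integral_norm _
      _ = ∫ ζ, ‖p.eval ζ‖ ^ 2 ∂μ := integral_congr_ae <| hq_norm.mono fun ζ hζ => by
          simp [hζ, sq]
      _ = ‖p.eval w‖ := by
          rw [hp.eval_self, norm_real,
            Real.norm_of_nonneg (integral_nonneg fun _ => by positivity)]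
  simp only [q, hr, eval_mul, eval_sub, eval_one, eval_C, eval_X, norm_mul] at hqp
  exact le_of_mul_le_mul_right hqp (norm_pos_iff.mpr (hp.eval_ne_zero_of_eq_mul hμ hr))

/-- On the circle `conj r · p = -z · conj p · (X r)` when `|z| = 1`; reproducing both sides
gives `conj (r w) = -z w · r w`, which forces `|w| = 1`. -/
theorem norm_eq_one_of_norm_eq_one (hp : IsReproducingKernel μ n w p) (hr : p = (X - C z) * r)
    (hz : ‖z‖ = 1) : ‖w‖ = 1 := by
  have hr_deg := hp.natDegree_lt_of_eq_mul hμ hr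
  have hXr : ∫ ζ, conj (p.eval ζ) * (X * r).eval ζ ∂μ = w * r.eval w := by
    rw [hp.2 _ ((natDegree_mul_le_of_le natDegree_X_le le_rfl).trans (by omega))]
    simp
  have hpt : ∀ᵐ ζ ∂μ, conj (conj (p.eval ζ) * r.eval ζ)
      = -z * (conj (p.eval ζ) * (X * r).eval ζ) := by
    filter_upwards [hμ] with ζ hζ
    have hζ' := conj_mul_self_of_norm_eq_one hζ
    have hz' := conj_mul_self_of_norm_eq_one hz
    simp only [hr, map_mul, map_sub, conj_conj, eval_mul, eval_sub, eval_X, eval_C]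
    linear_combination (conj (r.eval ζ) * r.eval ζ * z) * hζ'
      - (conj (r.eval ζ) * r.eval ζ * ζ) * hz'
  have hconj : conj (r.eval w) = -z * (w * r.eval w) := by
    rw [← hXr, ← integral_const_mul, ← hp.2 r (by omega), ← integral_conj]
    exact integral_congr_ae hpt
  have := congrArg norm hconj
  rw [RCLike.norm_conj, norm_mul, norm_neg, hz, one_mul, norm_mul] at this
  exact (mul_eq_right₀ (norm_ne_zero_iff.mpr (hp.eval_ne_zero_of_eq_mul hμ hr))).mp this.symm

theorem norm_lt_one_of_eval_eq_zero (hp : IsReproducingKernel μ n w p) (hw : 1 < ‖w‖)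
    (hz : p.eval z = 0) : ‖z‖ < 1 := by
  have hr : p = (X - C z) * (p /ₘ (X - C z)) := (mul_divByMonic_eq_iff_isRoot.mpr hz).symm
  have hle := hp.norm_one_sub_conj_mul_le hμ hr
  have hne : ‖z‖ ≠ 1 := fun h => hw.ne' (hp.norm_eq_one_of_norm_eq_one hμ hr h)
  have hsq : 0 ≤ (1 - ‖z‖ ^ 2) * (‖w‖ ^ 2 - 1) := by
    rw [← sq_norm_sub_sub_sq_norm_one_sub_conj_mul, sub_nonneg]
    gcongr
  have hw' : 0 < ‖w‖ ^ 2 - 1 := by nlinarith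
  have hz' : ‖z‖ ^ 2 ≤ 1 := by linarith [(mul_nonneg_iff_of_pos_right hw').mp hsq]
  exact lt_of_le_of_ne ((sq_le_one_iff₀ (norm_nonneg z)).mp hz') hne

end IsReproducingKernel

end UnitCircle

theorem cd_kernel_zeros_in_disk_general
    (μ : Measure ℂ) [IsFiniteMeasure μ]
    (hcirc : ∀ᵐ ζ ∂μ, ‖ζ‖ = 1)
    (φ : ℕ → Polynomial ℂ) (hφ : IsOPUC μ φ)
    (n : ℕ) (w : ℂ) (hw : 1 < ‖w‖)
    (z : ℂ) (hz : CDkernel φ n z w = 0) :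
    ‖z‖ < 1 :=
  (isReproducingKernel_kernelPoly hcirc hφ n w).norm_lt_one_of_eval_eq_zero hcirc hw
    (by rwa [eval_kernelPoly])

/-- If `|w| > 1`, every zero of `z ↦ K_n(z,w;μ)` lies in the open unit disk. -/
theorem cd_kernel_zeros_in_disk
    (μ : Measure ℂ) [IsFiniteMeasure μ]
    (hcirc : ∀ᵐ ζ ∂μ, ‖ζ‖ = 1)
    (hnt : Set.Infinite {ζ : ℂ | ∀ ε > 0, μ (Metric.ball ζ ε) ≠ 0})
    (φ : ℕ → Polynomial ℂ) (hφ : IsOPUC μ φ)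
    (n : ℕ) (w : ℂ) (hw : 1 < ‖w‖)
    (z : ℂ) (hz : CDkernel φ n z w = 0) :
    ‖z‖ < 1 :=
  cd_kernel_zeros_in_disk_general μ hcirc φ hφ n w hw z hz
end

section
/- Let μ be a nontrivial positive measure on the unit circle with CD kernels K_n. If |w| < 1, then every zero z of the polynomial z ↦ K_n(z,w;μ) satisfies |z| > 1. -/
open MeasureTheory Complex Polynomial

/-! In `L²(μ)` the kernel polynomial `P = K_n(·, w)` reproduces `f ↦ f(w)` on polynomials of
degree `≤ n`, and multiplication by `ζ` is an isometry because `μ` lives on the unit circle.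
If `P(z) = 0`, write `P = (X - z) s`; then `P ⟂ (X - w) s`, and expanding `σ = ⟪P, s⟫` and
`w σ = ⟪P, X s⟫` gives `‖w‖²‖σ‖² = (1 - ‖z‖²)‖P‖²‖s‖² + ‖z‖²‖σ‖²`. With Cauchy–Schwarz
`‖σ‖ ≤ ‖P‖‖s‖` and `σ ≠ 0`, the assumption `‖z‖ ≤ 1` would force `‖w‖ ≥ 1`. -/

open scoped ComplexConjugate InnerProductSpace ENNReal

section InnerProduct
variable {E : Type*} [NormedAddCommGroup E] [InnerProductSpace ℂ E]

-- `inner_self_eq_norm_sq_to_K` with the coercion as `Complex.ofReal`, so that `rw` can find it.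
theorem inner_self_eq_norm_sq_complex (x : E) : ⟪x, x⟫_ℂ = (‖x‖ : ℂ) ^ 2 :=
  inner_self_eq_norm_sq_to_K x

theorem norm_sub_smul_sq_eq_of_inner_eq_zero {s t : E} {z w : ℂ}
    (horth : ⟪t - z • s, t - w • s⟫_ℂ = 0) :
    (‖t - z • s‖ : ℂ) ^ 2 = (w - z) * ⟪t - z • s, s⟫_ℂ := by
  rw [inner_sub_right, inner_smul_right, sub_eq_zero] at horth
  rw [← inner_self_eq_norm_sq_complex, inner_sub_right (t - z • s) t, inner_smul_right, horth]
  ring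

theorem norm_sq_mul_norm_inner_sq_eq {s t : E} {z w : ℂ} (hts : ‖t‖ = ‖s‖)
    (horth : ⟪t - z • s, t - w • s⟫_ℂ = 0) :
    ‖w‖ ^ 2 * ‖⟪t - z • s, s⟫_ℂ‖ ^ 2 =
      (1 - ‖z‖ ^ 2) * ‖t - z • s‖ ^ 2 * ‖s‖ ^ 2 + ‖z‖ ^ 2 * ‖⟪t - z • s, s⟫_ℂ‖ ^ 2 := by
  have hpp := norm_sub_smul_sq_eq_of_inner_eq_zero horth
  rw [inner_sub_right, inner_smul_right, sub_eq_zero] at horth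
  have hσ : ⟪t - z • s, s⟫_ℂ = conj ⟪s, t⟫_ℂ - conj z * (‖s‖ : ℂ) ^ 2 := by
    rw [inner_sub_left, inner_smul_left, inner_self_eq_norm_sq_complex, inner_conj_symm]
  have hwσ : w * ⟪t - z • s, s⟫_ℂ = (‖s‖ : ℂ) ^ 2 - conj z * ⟪s, t⟫_ℂ := by
    rw [← horth, inner_sub_left, inner_smul_left, inner_self_eq_norm_sq_complex, hts]
  generalize ⟪t - z • s, s⟫_ℂ = σ at *
  generalize t - z • s = p at *
  have hwσc := congrArg conj hwσ
  have hppc := congrArg conj hpp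
  simp only [map_mul, map_sub, map_pow, conj_ofReal, conj_conj] at hwσc hppc
  have key : (w * conj w) * (σ * conj σ) =
      (1 - z * conj z) * (‖p‖ : ℂ) ^ 2 * (‖s‖ : ℂ) ^ 2 + (z * conj z) * (σ * conj σ) := by
    linear_combination
      (-(conj w * conj σ)) * hpp + (‖p‖ : ℂ) ^ 2 * (hwσc + z * hσ) - (z * σ) * hppc
  simp only [mul_conj'] at key
  exact_mod_cast key

theorem one_lt_norm_of_inner_sub_smul_eq_zero {s t : E} {z w : ℂ} (hts : ‖t‖ = ‖s‖)
    (hw : ‖w‖ < 1) (hp : t - z • s ≠ 0) (horth : ⟪t - z • s, t - w • s⟫_ℂ = 0) : 1 < ‖z‖ := by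
  by_contra! hz
  have key := norm_sq_mul_norm_inner_sq_eq hts horth
  have hcs : ‖⟪t - z • s, s⟫_ℂ‖ ≤ ‖t - z • s‖ * ‖s‖ := norm_inner_le_norm _ _
  have hσ : 0 < ‖⟪t - z • s, s⟫_ℂ‖ := by
    refine norm_pos_iff.mpr fun hσ => hp ?_
    simpa [hσ] using norm_sub_smul_sq_eq_of_inner_eq_zero horth
  generalize ‖⟪t - z • s, s⟫_ℂ‖ = σ at *
  have hz2 : 0 ≤ 1 - ‖z‖ ^ 2 := by nlinarith [norm_nonneg z]
  have hw2 : ‖w‖ ^ 2 < 1 := by nlinarith [norm_nonneg w]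
  have hcs2 : (1 - ‖z‖ ^ 2) * σ ^ 2 ≤ (1 - ‖z‖ ^ 2) * (‖t - z • s‖ ^ 2 * ‖s‖ ^ 2) :=
    mul_le_mul_of_nonneg_left (by rw [← mul_pow]; gcongr) hz2
  nlinarith [pow_pos hσ 2]

end InnerProduct

section L2

variable {μ : Measure ℂ} [IsFiniteMeasure μ]

theorem memLp_eval_of_ae_mem {K : Set ℂ} (hK : IsCompact K) (hμ : ∀ᵐ ζ ∂μ, ζ ∈ K)
    (f : ℂ[X]) (p : ℝ≥0∞) : MemLp (fun ζ => f.eval ζ) p μ := by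
  obtain ⟨C, hC⟩ := hK.exists_bound_of_continuousOn f.continuous.continuousOn
  exact MemLp.of_bound f.continuous.aestronglyMeasurable C (hμ.mono hC)

theorem memLp_eval_of_ae_norm_eq_one (hcirc : ∀ᵐ ζ ∂μ, ‖ζ‖ = 1) (f : ℂ[X]) (p : ℝ≥0∞) :
    MemLp (fun ζ => f.eval ζ) p μ :=
  memLp_eval_of_ae_mem (isCompact_sphere 0 1) (by simpa using hcirc) f p

variable (hcirc : ∀ᵐ ζ ∂μ, ‖ζ‖ = 1)
include hcirc

noncomputable def polyToL2 : ℂ[X] →ₗ[ℂ] Lp ℂ 2 μ where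
  toFun f := (memLp_eval_of_ae_norm_eq_one hcirc f 2).toLp _
  map_add' f g := by
    rw [← MemLp.toLp_add, MemLp.toLp_eq_toLp_iff]
    exact .of_forall fun ζ => eval_add
  map_smul' c f := by
    rw [RingHom.id_apply, ← MemLp.toLp_const_smul, MemLp.toLp_eq_toLp_iff]
    exact .of_forall fun ζ => eval_smul ..

theorem polyToL2_apply (f : ℂ[X]) :
    polyToL2 hcirc f =ᵐ[μ] fun ζ => f.eval ζ :=
  (memLp_eval_of_ae_norm_eq_one hcirc f 2).coeFn_toLp

theorem inner_polyToL2 (f g : ℂ[X]) :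
    ⟪polyToL2 hcirc f, polyToL2 hcirc g⟫_ℂ = ∫ ζ, conj (f.eval ζ) * g.eval ζ ∂μ := by
  rw [L2.inner_def]
  refine integral_congr_ae ?_
  filter_upwards [polyToL2_apply hcirc f, polyToL2_apply hcirc g] with ζ hf hg
  rw [hf, hg, RCLike.inner_apply, mul_comm]

theorem norm_polyToL2_X_mul (f : ℂ[X]) :
    ‖polyToL2 hcirc (X * f)‖ = ‖polyToL2 hcirc f‖ := by
  simp only [polyToL2, LinearMap.coe_mk, AddHom.coe_mk, Lp.norm_toLp]
  congr 1
  refine eLpNorm_congr_norm_ae ?_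
  filter_upwards [hcirc] with ζ hζ
  rw [eval_mul, eval_X, norm_mul, hζ, one_mul]

theorem orthonormal_polyToL2 {φ : ℕ → ℂ[X]} (hφ : IsOPUC μ φ) :
    Orthonormal ℂ (polyToL2 hcirc ∘ φ) :=
  orthonormal_iff_ite.mpr fun m k => (inner_polyToL2 hcirc (φ m) (φ k)).trans (hφ.2.2 m k)

end L2

noncomputable def cdKernelPoly (φ : ℕ → ℂ[X]) (n : ℕ) (w : ℂ) : ℂ[X] :=
  ∑ j ∈ Finset.range (n + 1), conj ((φ j).eval w) • φ j

theorem eval_cdKernelPoly (φ : ℕ → ℂ[X]) (n : ℕ) (w z : ℂ) :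
    (cdKernelPoly φ n w).eval z = CDkernel φ n z w := by
  simp only [cdKernelPoly, CDkernel, eval_finsetSum, eval_smul, smul_eq_mul]

theorem cdKernelPoly_mem_degreeLE {φ : ℕ → ℂ[X]} (hdeg : ∀ j, (φ j).degree = j) (n : ℕ) (w : ℂ) :
    cdKernelPoly φ n w ∈ degreeLE ℂ n :=
  Submodule.sum_mem _ fun j hj => Submodule.smul_mem _ _ <| mem_degreeLE.mpr <| by
    rw [hdeg j]
    exact_mod_cast Finset.mem_range_succ_iff.mp hj

theorem inner_cdKernelPoly {E : Type*} [NormedAddCommGroup E] [InnerProductSpace ℂ E]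
    (T : ℂ[X] →ₗ[ℂ] E) {φ : ℕ → ℂ[X]} (hdeg : ∀ j, (φ j).degree = j)
    (hT : Orthonormal ℂ (T ∘ φ)) (n : ℕ) (w : ℂ) {f : ℂ[X]} (hf : f ∈ degreeLE ℂ n) :
    ⟪T (cdKernelPoly φ n w), T f⟫_ℂ = f.eval w := by
  let S : Sequence ℂ := ⟨φ, hdeg⟩
  rw [← S.span_degreeLE fun i _ => (leadingCoeff_ne_zero.mpr (S.ne_zero i)).isUnit] at hf
  refine LinearMap.eqOn_span' (f := innerₛₗ ℂ (T (cdKernelPoly φ n w)) ∘ₗ T) (g := leval w)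
    ?_ hf
  rintro _ ⟨k, hk, rfl⟩
  change ⟪T (cdKernelPoly φ n w), T (φ k)⟫_ℂ = (φ k).eval w
  simp only [cdKernelPoly, map_sum, map_smul]
  exact (hT.inner_left_sum _ (Finset.mem_range_succ_iff.mpr hk)).trans (conj_conj _)

theorem cd_kernel_zeros_outside_disk_general
    (μ : Measure ℂ) [IsFiniteMeasure μ]
    (hcirc : ∀ᵐ ζ ∂μ, ‖ζ‖ = 1)
    (φ : ℕ → Polynomial ℂ) (hφ : IsOPUC μ φ)
    (n : ℕ) (w : ℂ) (hw : ‖w‖ < 1)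
    (z : ℂ) (hz : CDkernel φ n z w = 0) :
    1 < ‖z‖ := by
  let T := polyToL2 hcirc
  have reproduce {f : ℂ[X]} (hf : f ∈ degreeLE ℂ n) :
      ⟪T (cdKernelPoly φ n w), T f⟫_ℂ = f.eval w :=
    inner_cdKernelPoly T hφ.1 (orthonormal_polyToL2 hcirc hφ) n w hf
  obtain ⟨s, hs⟩ : X - C z ∣ cdKernelPoly φ n w := by
    rwa [dvd_iff_isRoot, IsRoot, eval_cdKernelPoly]
  have hTsub (a : ℂ) : T ((X - C a) * s) = T (X * s) - a • T s := by
    rw [sub_mul, C_mul', map_sub, map_smul]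
  have hmem : (X - C w) * s ∈ degreeLE ℂ n := by
    have := cdKernelPoly_mem_degreeLE hφ.1 n w
    rwa [hs, mem_degreeLE, degree_mul, degree_X_sub_C, ← degree_X_sub_C w, ← degree_mul,
      ← mem_degreeLE] at this
  refine one_lt_norm_of_inner_sub_smul_eq_zero (norm_polyToL2_X_mul hcirc s) hw ?_ ?_
  · rw [← hTsub, ← hs]
    intro h0
    simpa [h0] using reproduce (f := 1) (mem_degreeLE.mpr (degree_one_le.trans (by simp)))
  · rw [← hTsub, ← hTsub, ← hs, reproduce hmem]
    simp

/-- If `|w| < 1`, every zero of `z ↦ K_n(z,w;μ)` lies outside the closed unit disk. -/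
theorem cd_kernel_zeros_outside_disk
    (μ : Measure ℂ) [IsFiniteMeasure μ]
    (hcirc : ∀ᵐ ζ ∂μ, ‖ζ‖ = 1)
    (hnt : Set.Infinite {ζ : ℂ | ∀ ε > 0, μ (Metric.ball ζ ε) ≠ 0})
    (φ : ℕ → Polynomial ℂ) (hφ : IsOPUC μ φ)
    (n : ℕ) (w : ℂ) (hw : ‖w‖ < 1)
    (z : ℂ) (hz : CDkernel φ n z w = 0) :
    1 < ‖z‖ :=
  cd_kernel_zeros_outside_disk_general μ hcirc φ hφ n w hw z hz
end

section
/- Let μ be a nontrivial positive measure on the unit circle, w ∈ ℂ fixed, and dμ_w(ζ) = (1 − w̄ζ)dμ(ζ). Then for every n ≥ 1 and every 1 ≤ s ≤ n, ∫_T ζ̄^s K_n(ζ,w;μ) dμ_w(ζ) = 0. -/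
open MeasureTheory Complex Polynomial

theorem Continuous.integrable_of_ae_mem_isCompact {X E : Type*} [TopologicalSpace X]
    [T2Space X] [MeasurableSpace X] [OpensMeasurableSpace X] [NormedAddCommGroup E]
    {μ : Measure X} [IsFiniteMeasureOnCompacts μ] {K : Set X} {f : X → E}
    (hf : Continuous f) (hK : IsCompact K) (hμ : ∀ᵐ x ∂μ, x ∈ K) : Integrable f μ := by
  rw [← Measure.restrict_eq_self_of_ae_mem hμ]
  exact hf.continuousOn.integrableOn_compact hK

theorem continuous_CDkernel (φ : ℕ → Polynomial ℂ) (n : ℕ) (w : ℂ) :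
    Continuous fun ζ => CDkernel φ n ζ w := by
  unfold CDkernel
  fun_prop

section UnitCircle

variable {μ : Measure ℂ} [IsFiniteMeasure μ]

theorem Continuous.integrable_of_ae_norm_eq_one (hcirc : ∀ᵐ ζ ∂μ, ‖ζ‖ = 1) {E : Type*}
    [NormedAddCommGroup E] {f : ℂ → E} (hf : Continuous f) : Integrable f μ :=
  hf.integrable_of_ae_mem_isCompact (isCompact_sphere 0 1)
    (hcirc.mono fun _ h => mem_sphere_zero_iff_norm.2 h)

theorem integrable_conj_eval_mul_CDkernel (hcirc : ∀ᵐ ζ ∂μ, ‖ζ‖ = 1) (φ : ℕ → Polynomial ℂ)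
    (n : ℕ) (w : ℂ) (p : Polynomial ℂ) :
    Integrable (fun ζ => (starRingEnd ℂ) (p.eval ζ) * CDkernel φ n ζ w) μ :=
  ((continuous_star.comp p.continuous).mul (continuous_CDkernel φ n w)).integrable_of_ae_norm_eq_one
    hcirc

namespace IsOPUC

variable {φ : ℕ → Polynomial ℂ}

theorem integral_conj_eval_mul_CDkernel (hφ : IsOPUC μ φ) (hcirc : ∀ᵐ ζ ∂μ, ‖ζ‖ = 1)
    (w : ℂ) {n j : ℕ} (hj : j ≤ n) :
    ∫ ζ, (starRingEnd ℂ) ((φ j).eval ζ) * CDkernel φ n ζ w ∂μ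
      = (starRingEnd ℂ) ((φ j).eval w) := by
  simp_rw [CDkernel, Finset.mul_sum, mul_left_comm ((starRingEnd ℂ) ((φ j).eval _))]
  rw [integral_finsetSum]
  · simp_rw [integral_const_mul, hφ.2.2]
    simp [Nat.lt_succ_of_le hj]
  · exact fun m _ => (Continuous.integrable_of_ae_norm_eq_one hcirc (by fun_prop)).const_mul _

theorem integral_conj_eval_mul_CDkernel_of_mem_degreeLE (hφ : IsOPUC μ φ)
    (hcirc : ∀ᵐ ζ ∂μ, ‖ζ‖ = 1) (w : ℂ) {n : ℕ} {p : Polynomial ℂ} (hp : p ∈ degreeLE ℂ n) :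
    ∫ ζ, (starRingEnd ℂ) (p.eval ζ) * CDkernel φ n ζ w ∂μ = (starRingEnd ℂ) (p.eval w) := by
  let S : Sequence ℂ := ⟨φ, hφ.1⟩
  rw [← S.span_degreeLE fun i _ => (leadingCoeff_ne_zero.2 (S.ne_zero i)).isUnit] at hp
  induction hp using Submodule.span_induction with
  | mem q hq =>
    obtain ⟨j, hj, rfl⟩ := hq
    exact hφ.integral_conj_eval_mul_CDkernel hcirc w hj
  | zero => simp
  | add q r _ _ ihq ihr =>
    simp_rw [eval_add, map_add, add_mul]
    rw [integral_add (integrable_conj_eval_mul_CDkernel hcirc φ n w q)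
      (integrable_conj_eval_mul_CDkernel hcirc φ n w r), ihq, ihr]
  | smul a q _ ihq =>
    simp_rw [eval_smul, smul_eq_mul, map_mul, mul_assoc]
    rw [integral_const_mul, ihq]

end IsOPUC

end UnitCircle

theorem cd_kernel_orthogonality_general
    (μ : Measure ℂ) [IsFiniteMeasure μ]
    (hcirc : ∀ᵐ ζ ∂μ, ‖ζ‖ = 1)
    (φ : ℕ → Polynomial ℂ) (hφ : IsOPUC μ φ)
    (w : ℂ) (n s : ℕ) (hs1 : 1 ≤ s) (hsn : s ≤ n) :
    ∫ ζ, ((starRingEnd ℂ) ζ) ^ s * CDkernel φ n ζ w *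
      (1 - (starRingEnd ℂ) w * ζ) ∂μ = 0 := by
  obtain ⟨t, rfl⟩ := Nat.exists_eq_add_of_le' hs1
  have hK : ∀ k ≤ n, ∫ ζ, (starRingEnd ℂ) ζ ^ k * CDkernel φ n ζ w ∂μ = (starRingEnd ℂ) w ^ k :=
    fun k hk => by
      simpa using hφ.integral_conj_eval_mul_CDkernel_of_mem_degreeLE hcirc w
        (p := X ^ k) (mem_degreeLE.2 (by simpa using hk))
  have hae : (fun ζ => (starRingEnd ℂ) ζ ^ (t + 1) * CDkernel φ n ζ w *
      (1 - (starRingEnd ℂ) w * ζ)) =ᵐ[μ] fun ζ => (starRingEnd ℂ) ζ ^ (t + 1) * CDkernel φ n ζ w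
        - (starRingEnd ℂ) w * ((starRingEnd ℂ) ζ ^ t * CDkernel φ n ζ w) := by
    filter_upwards [hcirc] with ζ hζ
    have hunit : (starRingEnd ℂ) ζ * ζ = 1 := by rw [conj_mul', hζ]; norm_num
    linear_combination (-(starRingEnd ℂ) w * (starRingEnd ℂ) ζ ^ t * CDkernel φ n ζ w) * hunit
  have hint : ∀ k, Integrable (fun ζ => (starRingEnd ℂ) ζ ^ k * CDkernel φ n ζ w) μ := fun k =>
    ((continuous_star.pow k).mul (continuous_CDkernel φ n w)).integrable_of_ae_norm_eq_one hcirc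
  rw [integral_congr_ae hae, integral_sub (hint _) ((hint t).const_mul _), integral_const_mul,
    hK _ hsn, hK t (by omega)]
  ring

/-- Orthogonality relations for CD kernels with respect to `dμ_w(ζ) = (1 - w̄ζ)dμ(ζ)`:
`∫ ζ̄^s K_n(ζ,w;μ) dμ_w(ζ) = 0` for `1 ≤ s ≤ n`. -/
theorem cd_kernel_orthogonality
    (μ : Measure ℂ) [IsFiniteMeasure μ]
    (hcirc : ∀ᵐ ζ ∂μ, ‖ζ‖ = 1)
    (hnt : Set.Infinite {ζ : ℂ | ∀ ε > 0, μ (Metric.ball ζ ε) ≠ 0})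
    (φ : ℕ → Polynomial ℂ) (hφ : IsOPUC μ φ)
    (w : ℂ) (n s : ℕ) (hs1 : 1 ≤ s) (hsn : s ≤ n) :
    ∫ ζ, ((starRingEnd ℂ) ζ) ^ s * CDkernel φ n ζ w *
      (1 - (starRingEnd ℂ) w * ζ) ∂μ = 0 :=
  cd_kernel_orthogonality_general μ hcirc φ hφ w n s hs1 hsn
end

section
/- Let α, τ ∈ ℂ with |α| < 1, |τ| = 1, and define c = Im(τα)/(Re(τα) − 1), g = (1/2)|1 − τα|²/(1 − Re(τα)), and τ' = ((1 − ic)/(1 + ic))·τ. Then α = (1/τ)·(1 − 2g − ic)/(1 − ic) and (τ − ᾱ)/(1 − τα) = τ'. -/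
/-!
Write `w = τα`; then `|Re w| ≤ |w| < 1`, so `r = 1 - Re w ≠ 0`. The definitions of `c` and `g`
say exactly that `r (1 - ic) = 1 - w̄`, `r (1 + ic) = 1 - w` and `2 g r = |1 - w|² = (1 - w)(1 - w̄)`.
Hence `r (1 - 2g - ic) = w (1 - w̄)`, giving `(1 - 2g - ic)/(1 - ic) = w`, and
`(1 - ic)/(1 + ic) = (1 - w̄)/(1 - w)`. Finally `|τ| = 1` gives `ᾱ = τ w̄`, so `τ - ᾱ = τ (1 - w̄)`.
-/

open Complex ComplexConjugate

namespace Complex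

section
variable {w : ℂ} {c g : ℝ}

lemma one_sub_ofReal_re_ne_zero_of_re_ne_one (hw : w.re ≠ 1) : (1 - w.re : ℂ) ≠ 0 := by
  exact_mod_cast sub_ne_zero.mpr hw.symm

lemma one_sub_ne_zero_of_re_ne_one (hw : w.re ≠ 1) : 1 - w ≠ 0 := by
  rw [sub_ne_zero]; rintro rfl; simp at hw

lemma one_sub_conj_ne_zero_of_re_ne_one (hw : w.re ≠ 1) : 1 - conj w ≠ 0 :=
  one_sub_ne_zero_of_re_ne_one (by rwa [conj_re])

lemma mul_one_sub_re_eq_neg_im (hw : w.re ≠ 1) (hc : c = w.im / (w.re - 1)) :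
    c * (1 - w.re) = -w.im := by
  rw [hc]; field_simp [sub_ne_zero.mpr hw]; ring

lemma one_sub_mul_I_eq (hw : w.re ≠ 1) (hc : c = w.im / (w.re - 1)) :
    1 - c * I = (1 - conj w) / (1 - w.re) := by
  rw [eq_div_iff (one_sub_ofReal_re_ne_zero_of_re_ne_one hw)]
  apply Complex.ext <;> simp
  linarith [mul_one_sub_re_eq_neg_im hw hc]

lemma one_add_mul_I_eq (hw : w.re ≠ 1) (hc : c = w.im / (w.re - 1)) :
    1 + c * I = (1 - w) / (1 - w.re) := by
  rw [eq_div_iff (one_sub_ofReal_re_ne_zero_of_re_ne_one hw)]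
  apply Complex.ext <;> simp
  linarith [mul_one_sub_re_eq_neg_im hw hc]

lemma two_mul_ofReal_eq (hg : g = (1 / 2) * ‖1 - w‖ ^ 2 / (1 - w.re)) :
    2 * (g : ℂ) = (1 - w) * (1 - conj w) / (1 - w.re) := by
  rw [show 1 - conj w = conj (1 - w) by simp, mul_conj', hg]
  push_cast
  ring

lemma one_sub_two_mul_sub_mul_I_div_one_sub_mul_I (hw : w.re ≠ 1) (hc : c = w.im / (w.re - 1))
    (hg : g = (1 / 2) * ‖1 - w‖ ^ 2 / (1 - w.re)) :
    (1 - 2 * g - c * I) / (1 - c * I) = w := by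
  rw [sub_right_comm, one_sub_mul_I_eq hw hc, two_mul_ofReal_eq hg]
  field_simp [one_sub_ofReal_re_ne_zero_of_re_ne_one hw, one_sub_conj_ne_zero_of_re_ne_one hw]
  ring

lemma one_sub_mul_I_div_one_add_mul_I (hw : w.re ≠ 1) (hc : c = w.im / (w.re - 1)) :
    (1 - c * I) / (1 + c * I) = (1 - conj w) / (1 - w) := by
  rw [one_sub_mul_I_eq hw hc, one_add_mul_I_eq hw hc,
    div_div_div_cancel_right₀ (one_sub_ofReal_re_ne_zero_of_re_ne_one hw)]

end

lemma conj_eq_mul_conj_mul {τ : ℂ} (hτ : ‖τ‖ = 1) (α : ℂ) : conj α = τ * conj (τ * α) := by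
  rw [map_mul, ← mul_assoc, mul_conj', hτ]
  simp

end Complex

/-- Inverse formula: with `c = Im(τα)/(Re(τα) - 1)`, `g = (1/2)|1 - τα|²/(1 - Re(τα))` and
`τ' = ((1 - ic)/(1 + ic))τ`, one recovers `α = (1/τ)(1 - 2g - ic)/(1 - ic)` and
`(τ - ᾱ)/(1 - τα) = τ'`. -/
theorem inverse_parametrization_formula
    (α τ : ℂ) (hα : ‖α‖ < 1) (hτ : ‖τ‖ = 1)
    (c g : ℝ)
    (hc : c = (τ * α).im / ((τ * α).re - 1))
    (hg : g = (1 / 2) * ‖1 - τ * α‖ ^ 2 / (1 - (τ * α).re))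
    (τ' : ℂ) (hτ' : τ' = ((1 - c * I) / (1 + c * I)) * τ) :
    α = (1 / τ) * ((1 - 2 * g - c * I) / (1 - c * I)) ∧
      (τ - (starRingEnd ℂ) α) / (1 - τ * α) = τ' := by
  have hτ0 : τ ≠ 0 := norm_ne_zero_iff.mp (by simp [hτ])
  have hw : (τ * α).re ≠ 1 :=
    ((re_le_norm _).trans_lt (by rwa [norm_mul, hτ, one_mul])).ne
  constructor
  · rw [one_sub_two_mul_sub_mul_I_div_one_sub_mul_I hw hc hg]
    field_simp
  · rw [hτ', one_sub_mul_I_div_one_add_mul_I hw hc, conj_eq_mul_conj_mul hτ α]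
    field_simp [one_sub_ne_zero_of_re_ne_one hw]
end

section
/- Let (R_n) satisfy R_{−1} = 0, R_0 = 1, and R_{n+1}(z) = [(1 + ic_{n+1})z + (1 − ic_{n+1})] R_n(z) − 4 d_{n+1} z R_{n−1}(z) with c_n real and d_{n+1} real. Then each R_n is conjugate-reciprocal: z^n conj(R_n(1/z̄)) = R_n(z), i.e., the coefficient vector of R_n satisfies a_k = conj(a_{n−k}). -/
/-!
Write `p ↦ Xⁿ p*(1/X)` for the degree-`n` reflection followed by conjugation of the
coefficients. Being fixed by it is multiplicative (degrees add) and closed under differences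
of equal degree. In the recurrence the factor `(1 + i c) X + (1 - i c)` is fixed at degree 1,
and `4 d X` at degree 2 because `d` is real, so both terms of `R_{n+2}` are fixed at
degree `n + 2` and the claim follows by two-step induction. The evaluation identity and the
coefficient symmetry are the same fact read through `eval` and through `coeff`.
-/

open Complex Polynomial

namespace Polynomial

variable {R : Type*} [CommRing R] [StarRing R]

def IsConjReciprocal (n : ℕ) (p : R[X]) : Prop :=
  p.natDegree ≤ n ∧ reflect n p = p.map (starRingEnd R)

theorem isConjReciprocal_one : IsConjReciprocal 0 (1 : R[X]) := by
  simp [IsConjReciprocal]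

theorem isConjReciprocal_C_star_mul_X_add_C (a : R) :
    IsConjReciprocal 1 (C (star a) * X + C a) := by
  refine ⟨natDegree_linear_le, ?_⟩
  simp [starRingEnd_apply, add_comm]

theorem isConjReciprocal_C_mul_X {r : R} (hr : star r = r) : IsConjReciprocal 2 (C r * X) := by
  refine ⟨(natDegree_C_mul_le r X).trans (natDegree_X_le.trans one_le_two), ?_⟩
  rw [← pow_one X, reflect_C_mul_X_pow]
  simp [starRingEnd_apply, hr]

namespace IsConjReciprocal

theorem mul {m n : ℕ} {p q : R[X]} (hp : IsConjReciprocal m p) (hq : IsConjReciprocal n q) :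
    IsConjReciprocal (m + n) (p * q) :=
  ⟨natDegree_mul_le.trans (add_le_add hp.1 hq.1), by
    rw [reflect_mul p q hp.1 hq.1, hp.2, hq.2, Polynomial.map_mul]⟩

theorem sub {n : ℕ} {p q : R[X]} (hp : IsConjReciprocal n p) (hq : IsConjReciprocal n q) :
    IsConjReciprocal n (p - q) :=
  ⟨(natDegree_sub_le_of_le hp.1 hq.1).trans (max_self n).le, by
    rw [reflect_sub, hp.2, hq.2, Polynomial.map_sub]⟩

theorem coeff_eq_star_coeff {n : ℕ} {p : R[X]} (hp : IsConjReciprocal n p) {k : ℕ}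
    (hk : k ≤ n) : p.coeff k = star (p.coeff (n - k)) := by
  simpa [coeff_reflect, revAt_le (Nat.sub_le n k), Nat.sub_sub_self hk, starRingEnd_apply]
    using congr_arg (coeff · (n - k)) hp.2

theorem pow_mul_star_eval_inv {K : Type*} [Field K] [StarRing K] {n : ℕ} {p : K[X]}
    (hp : IsConjReciprocal n p) {z : K} (hz : z ≠ 0) :
    z ^ n * star (p.eval (1 / star z)) = p.eval z := by
  have : Invertible z := invertibleOfNonzero hz
  have h := eval₂_reflect_mul_pow (RingHom.id K) z n p hp.1
  rw [hp.2, invOf_eq_inv, eval₂_map, RingHomCompTriple.comp_eq, eval₂_id] at h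
  rw [← h, mul_comm, ← starRingEnd_apply, ← eval₂_at_apply, one_div, map_inv₀,
    starRingEnd_apply, star_star]

end IsConjReciprocal

end Polynomial

theorem Complex.isConjReciprocal_linear (c : ℝ) :
    IsConjReciprocal 1 (C (1 + (c : ℂ) * I) * X + C (1 - (c : ℂ) * I)) := by
  convert isConjReciprocal_C_star_mul_X_add_C (1 - (c : ℂ) * I) using 3
  simp

/-- Each `R_n` from the three-term recurrence with real coefficients is
conjugate-reciprocal: `zⁿ conj(R_n(1/z̄)) = R_n(z)`, equivalently the coefficients
satisfy `a_k = conj(a_{n-k})`. -/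
theorem kernel_recurrence_conjugate_reciprocal
    (c : ℕ → ℝ) (d : ℕ → ℝ)
    (R : ℕ → Polynomial ℂ)
    (hR0 : R 0 = 1)
    (hR1 : R 1 = C (1 + (c 1 : ℂ) * I) * X + C (1 - (c 1 : ℂ) * I))
    (hrec : ∀ n, R (n + 2) =
      (C (1 + (c (n + 2) : ℂ) * I) * X + C (1 - (c (n + 2) : ℂ) * I)) * R (n + 1)
        - C (4 * (d (n + 2) : ℂ)) * X * R n) :
    ∀ n, (∀ z : ℂ, z ≠ 0 →
        z ^ n * (starRingEnd ℂ) ((R n).eval (1 / (starRingEnd ℂ) z)) = (R n).eval z) ∧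
      (∀ k : ℕ, k ≤ n → (R n).coeff k = (starRingEnd ℂ) ((R n).coeff (n - k))) := by
  have hR : ∀ n, IsConjReciprocal n (R n) := by
    intro n
    induction n using Nat.twoStepInduction with
    | zero => exact hR0 ▸ isConjReciprocal_one
    | one => exact hR1 ▸ isConjReciprocal_linear (c 1)
    | more n h₀ h₁ =>
      have hd : star (4 * (d (n + 2) : ℂ)) = 4 * (d (n + 2) : ℂ) := by simp
      have hA := (isConjReciprocal_linear (c (n + 2))).mul h₁
      have hB := (isConjReciprocal_C_mul_X hd).mul h₀
      rw [add_comm 1] at hA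
      rw [add_comm 2] at hB
      rw [hrec n]
      exact hA.sub hB
  simp only [starRingEnd_apply]
  exact fun n => ⟨fun z hz => (hR n).pow_mul_star_eval_inv hz,
    fun k hk => (hR n).coeff_eq_star_coeff hk⟩
end
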